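/- arXiv:2306.06747 — 3 statements merged into one kernel-verified Lean document; each statement's English description precedes it below -/
import Mathlib

section
/- Let E and F be real normed vector spaces, let A, B > 0, and let G : E → F be differentiable such that ‖fderiv ℝ G z‖ ≤ A for every z ∈ E and ‖(fderiv ℝ G z) v‖ ≥ (1/B)·‖v‖ for every z ∈ E and v ∈ E. For z, z' ∈ E define the intrinsic image distance ℓ(z, z') as the infimum, over all continuously differentiable curves γ : ℝ → E with γ(0) = z and γ(1) = z', of ∫_{0}^{1} ‖deriv (G ∘ γ) t‖ dt. Then, with C = max(A, B), (1/C) · ‖z − z'‖ ≤ ℓ(z, z') ≤ C · ‖z − z'‖. -/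
/-!
The chain rule gives `deriv (G ∘ γ) t = fderiv ℝ G (γ t) (deriv γ t)`, so the Jacobian bounds
squeeze the image speed between `‖deriv γ t‖ / B` and `A * ‖deriv γ t‖`. Since the displacement
`‖z' - z‖` of any curve is at most the integral of its speed, every image length is at least
`‖z' - z‖ / B`; the straight segment from `z` to `z'` has image length at most `A * ‖z' - z‖`.
-/

open MeasureTheory Set

section ImageSpeed

variable {E F : Type*} [NormedAddCommGroup E] [NormedSpace ℝ E]
  [NormedAddCommGroup F] [NormedSpace ℝ F] {G : E → F} {γ : ℝ → E}

/-- Unlike `stronglyMeasurable_deriv`, this needs no completeness of `F`: `deriv f` is the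
pointwise limit of continuous difference quotients. -/
theorem Differentiable.stronglyMeasurable_deriv {f : ℝ → F} (hf : Differentiable ℝ f) :
    StronglyMeasurable (_root_.deriv f) := by
  have hcont := hf.continuous
  refine stronglyMeasurable_of_tendsto Filter.atTop
    (f := fun (n : ℕ) t => (1 / (n + 1 : ℝ))⁻¹ • (f (t + 1 / (n + 1)) - f t))
    (fun n => (by fun_prop : Continuous _).stronglyMeasurable) (tendsto_pi_nhds.2 fun t => ?_)
  exact (hf t).hasDerivAt.tendsto_slope_zero_right.comp <| tendsto_nhdsWithin_iff.2
    ⟨tendsto_one_div_add_atTop_nhds_zero_nat, .of_forall fun n => mem_Ioi.2 (by positivity)⟩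

theorem norm_deriv_comp_le_of_norm_fderiv_le {A t : ℝ} (hG : DifferentiableAt ℝ G (γ t))
    (hγ : DifferentiableAt ℝ γ t) (hupper : ‖fderiv ℝ G (γ t)‖ ≤ A) :
    ‖deriv (G ∘ γ) t‖ ≤ A * ‖deriv γ t‖ := by
  rw [fderiv_comp_deriv t hG hγ]
  exact (fderiv ℝ G (γ t)).le_of_opNorm_le hupper _

theorem norm_deriv_le_mul_norm_deriv_comp {B t : ℝ} (hB : 0 < B)
    (hG : DifferentiableAt ℝ G (γ t)) (hγ : DifferentiableAt ℝ γ t)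
    (hlower : ∀ v : E, (1 / B) * ‖v‖ ≤ ‖fderiv ℝ G (γ t) v‖) :
    ‖deriv γ t‖ ≤ B * ‖deriv (G ∘ γ) t‖ := by
  rw [fderiv_comp_deriv t hG hγ]
  have := hlower (deriv γ t)
  rwa [one_div_mul_eq_div, div_le_iff₀' hB] at this

theorem intervalIntegrable_norm_deriv_comp {A a b : ℝ} (hG : Differentiable ℝ G)
    (hupper : ∀ z, ‖fderiv ℝ G z‖ ≤ A) (hγ : ContDiff ℝ 1 γ) :
    IntervalIntegrable (fun t => ‖deriv (G ∘ γ) t‖) volume a b := by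
  have hγd : Differentiable ℝ γ := hγ.differentiable one_ne_zero
  have hmajorant : Continuous fun t => A * ‖deriv γ t‖ :=
    continuous_const.mul (hγ.continuous_deriv le_rfl).norm
  refine (hmajorant.intervalIntegrable (μ := volume) a b).mono_fun
    (hG.comp hγd).stronglyMeasurable_deriv.norm.aestronglyMeasurable
    (Filter.Eventually.of_forall fun t => ?_)
  simp only [norm_norm]
  exact (norm_deriv_comp_le_of_norm_fderiv_le (hG _) (hγd t) (hupper _)).trans (le_abs_self _)

theorem norm_sub_le_mul_integral_norm_deriv_comp {A B a b : ℝ} (hab : a ≤ b) (hB : 0 < B)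
    (hG : Differentiable ℝ G) (hupper : ∀ z, ‖fderiv ℝ G z‖ ≤ A)
    (hlower : ∀ z v : E, (1 / B) * ‖v‖ ≤ ‖fderiv ℝ G z v‖) (hγ : ContDiff ℝ 1 γ) :
    ‖γ b - γ a‖ ≤ B * ∫ t in a..b, ‖deriv (G ∘ γ) t‖ := by
  have hγd : Differentiable ℝ γ := hγ.differentiable one_ne_zero
  rw [← intervalIntegral.integral_const_mul]
  exact norm_sub_le_integral_of_norm_deriv_le_of_le hab hγ.continuous.continuousOn
    hγd.differentiableOn
    (Filter.Eventually.of_forall fun t _ =>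
      norm_deriv_le_mul_norm_deriv_comp hB (hG _) (hγd t) (hlower _))
    ((intervalIntegrable_norm_deriv_comp hG hupper hγ).const_mul B)

theorem integral_norm_deriv_comp_lineMap_le {A : ℝ} (hG : Differentiable ℝ G)
    (hupper : ∀ z, ‖fderiv ℝ G z‖ ≤ A) (z z' : E) :
    ∫ t in (0 : ℝ)..1, ‖deriv (G ∘ AffineMap.lineMap z z') t‖ ≤ A * ‖z' - z‖ := by
  have hspeed : ∀ t, ‖deriv (G ∘ AffineMap.lineMap z z') t‖ ≤ A * ‖z' - z‖ := fun t => by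
    simpa only [AffineMap.hasDerivAt_lineMap.deriv] using
      norm_deriv_comp_le_of_norm_fderiv_le (hG _)
        AffineMap.hasDerivAt_lineMap.differentiableAt (hupper _)
  have := intervalIntegral.norm_integral_le_of_norm_le_const (a := 0) (b := 1)
    (f := fun t => ‖deriv (G ∘ AffineMap.lineMap z z') t‖)
    fun t _ => (norm_norm _).trans_le (hspeed t)
  rw [sub_zero, abs_one, mul_one] at this
  exact (Real.le_norm_self _).trans this

end ImageSpeed

theorem intrinsic_image_distance_bounds_general {E F : Type*}
    [NormedAddCommGroup E] [NormedSpace ℝ E]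
    [NormedAddCommGroup F] [NormedSpace ℝ F]
    (G : E → F) (hG : Differentiable ℝ G) (A B : ℝ) (hB : 0 < B)
    (hupper : ∀ z : E, ‖fderiv ℝ G z‖ ≤ A)
    (hlower : ∀ z v : E, ‖(fderiv ℝ G z) v‖ ≥ (1 / B) * ‖v‖)
    (z z' : E) :
    (1 / max A B) * ‖z - z'‖ ≤
        sInf {L : ℝ | ∃ γ : ℝ → E, ContDiff ℝ 1 γ ∧ γ 0 = z ∧ γ 1 = z' ∧
          L = ∫ t in (0:ℝ)..1, ‖deriv (G ∘ γ) t‖} ∧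
      sInf {L : ℝ | ∃ γ : ℝ → E, ContDiff ℝ 1 γ ∧ γ 0 = z ∧ γ 1 = z' ∧
          L = ∫ t in (0:ℝ)..1, ‖deriv (G ∘ γ) t‖} ≤ max A B * ‖z - z'‖ := by
  set S := {L : ℝ | ∃ γ : ℝ → E, ContDiff ℝ 1 γ ∧ γ 0 = z ∧ γ 1 = z' ∧
    L = ∫ t in (0:ℝ)..1, ‖deriv (G ∘ γ) t‖}
  have hM : 0 < max A B := lt_max_of_lt_right hB
  have hS_lower : ∀ L ∈ S, (1 / max A B) * ‖z - z'‖ ≤ L := by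
    rintro _ ⟨γ, hγ, rfl, rfl, rfl⟩
    have hlen := norm_sub_le_mul_integral_norm_deriv_comp zero_le_one hB hG hupper hlower hγ
    have hnonneg : 0 ≤ ∫ t in (0 : ℝ)..1, ‖deriv (G ∘ γ) t‖ :=
      intervalIntegral.integral_nonneg zero_le_one fun _ _ => norm_nonneg _
    rw [one_div_mul_eq_div, div_le_iff₀' hM, norm_sub_rev]
    exact hlen.trans (mul_le_mul_of_nonneg_right (le_max_right A B) hnonneg)
  have hsegment : ∫ t in (0 : ℝ)..1, ‖deriv (G ∘ AffineMap.lineMap z z') t‖ ∈ S :=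
    ⟨_, AffineMap.contDiff_lineMap z z', by simp, by simp, rfl⟩
  refine ⟨le_csInf ⟨_, hsegment⟩ hS_lower, (csInf_le ⟨_, hS_lower⟩ hsegment).trans ?_⟩
  calc _ ≤ A * ‖z' - z‖ := integral_norm_deriv_comp_lineMap_le hG hupper z z'
    _ ≤ max A B * ‖z - z'‖ := by
      rw [norm_sub_rev]
      exact mul_le_mul_of_nonneg_right (le_max_left A B) (norm_nonneg _)

/-- **Continuity bound of Appendix A (Eq. 5).** If the Jacobian of `G` is
uniformly bounded above in operator norm by `A` and bounded below by `1/B`,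
then the intrinsic image distance `ℓ(z, z')` — the infimum, over continuously
differentiable curves `γ` joining `z` to `z'`, of the length of the image
curve `G ∘ γ` — satisfies `(1/C)·‖z - z'‖ ≤ ℓ(z, z') ≤ C·‖z - z'‖` with
`C = max A B`. -/
theorem intrinsic_image_distance_bounds {E F : Type*}
    [NormedAddCommGroup E] [NormedSpace ℝ E]
    [NormedAddCommGroup F] [NormedSpace ℝ F]
    (G : E → F) (hG : Differentiable ℝ G) (A B : ℝ) (hA : 0 < A) (hB : 0 < B)
    (hupper : ∀ z : E, ‖fderiv ℝ G z‖ ≤ A)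
    (hlower : ∀ z v : E, ‖(fderiv ℝ G z) v‖ ≥ (1 / B) * ‖v‖)
    (z z' : E) :
    (1 / max A B) * ‖z - z'‖ ≤
        sInf {L : ℝ | ∃ γ : ℝ → E, ContDiff ℝ 1 γ ∧ γ 0 = z ∧ γ 1 = z' ∧
          L = ∫ t in (0:ℝ)..1, ‖deriv (G ∘ γ) t‖} ∧
      sInf {L : ℝ | ∃ γ : ℝ → E, ContDiff ℝ 1 γ ∧ γ 0 = z ∧ γ 1 = z' ∧
          L = ∫ t in (0:ℝ)..1, ‖deriv (G ∘ γ) t‖} ≤ max A B * ‖z - z'‖ :=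
  intrinsic_image_distance_bounds_general G hG A B hB hupper hlower z z'
end

section
/- Let n be a positive natural number, let relu : (Fin n → ℝ) → (Fin n → ℝ) be the coordinatewise map (relu x) i = max (x i) 0, and let p, q ∈ Fin n → ℝ. Then there exist m ≤ n and real numbers 0 = t₀ ≤ t₁ ≤ … ≤ t_{m+1} = 1 such that, writing c(t) = p + t·(q − p), the map t ↦ relu (c t) is affine on each interval [tᵢ, tᵢ₊₁]; consequently the image relu '' (segment ℝ p q) equals the finite union over i < m+1 of the segments from relu (c tᵢ) to relu (c tᵢ₊₁), i.e., the image of a line segment under coordinatewise ReLU is a union of at most n+1 line segments. -/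
/-- The coordinatewise ReLU map on `Fin n → ℝ`. -/
def relu (n : ℕ) : (Fin n → ℝ) → (Fin n → ℝ) := fun x i => max (x i) 0

/-- An affine function nonneg at the endpoints is nonneg on the interval. -/
lemma affine_nonneg_of_endpoints {P d a b s : ℝ} (hab : a ≤ b) (h1 : a ≤ s) (h2 : s ≤ b)
    (ha : 0 ≤ P + a * d) (hb : 0 ≤ P + b * d) : 0 ≤ P + s * d := by
  rcases eq_or_lt_of_le hab with h | h
  · have : s = a := le_antisymm (h ▸ h2) h1
    simpa [this] using ha
  · nlinarith [mul_nonneg (sub_nonneg.2 h2) ha, mul_nonneg (sub_nonneg.2 h1) hb]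

/-- Image of an interval under an affine curve is a segment. -/
lemma image_affine_Icc {E : Type*} [AddCommGroup E] [Module ℝ E] (A B : E) {u v : ℝ}
    (h : u ≤ v) :
    (fun s : ℝ => A + s • B) '' Set.Icc u v = segment ℝ (A + u • B) (A + v • B) := by
  have hf : (fun s : ℝ => A + s • B) = fun s => (AffineMap.lineMap A (A + B) : ℝ →ᵃ[ℝ] E) s := by
    funext s
    simp [AffineMap.lineMap_apply]
    abel
  rw [← segment_eq_Icc h, hf]
  have h2 := image_segment ℝ (AffineMap.lineMap A (A + B) : ℝ →ᵃ[ℝ] E) u v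
  rw [show (fun s => (AffineMap.lineMap A (A + B) : ℝ →ᵃ[ℝ] E) s) = ⇑(AffineMap.lineMap A (A + B) : ℝ →ᵃ[ℝ] E) from rfl, h2]
  simp [AffineMap.lineMap_apply, add_comm]

/-- **ReLU maps a segment to a chain of at most `n + 1` segments (ExactLine,
single layer).** For `c t = p + t • (q - p)`, there are breakpoints
`0 = t₀ ≤ t₁ ≤ … ≤ t_{m+1} = 1` with `m ≤ n` such that `t ↦ relu (c t)` is
affine on each `[tᵢ, tᵢ₊₁]`, and the image of the segment from `p` to `q`
under coordinatewise ReLU is the union of the segments joining consecutive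
breakpoint images. -/
theorem relu_image_segment_is_chain_of_segments
    (n : ℕ) (hn : 0 < n) (p q : Fin n → ℝ) :
    ∃ m : ℕ, m ≤ n ∧ ∃ t : Fin (m + 2) → ℝ,
      Monotone t ∧ t 0 = 0 ∧ t (Fin.last (m + 1)) = 1 ∧
      (∀ i : Fin (m + 1), ∃ a b : Fin n → ℝ,
        ∀ s ∈ Set.Icc (t i.castSucc) (t i.succ),
          relu n (p + s • (q - p)) = a + s • b) ∧
      relu n '' segment ℝ p q =
        ⋃ i : Fin (m + 1),
          segment ℝ (relu n (p + t i.castSucc • (q - p)))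
            (relu n (p + t i.succ • (q - p))) := by
  classical
  -- clamped roots of the coordinates
  set r : Fin n → ℝ := fun k => min 1 (max 0 (if p k = q k then 0 else p k / (p k - q k)))
    with hr
  set w : Fin (n + 2) → ℝ := Fin.cons 0 (Fin.cons 1 r) with hw
  set σ : Equiv.Perm (Fin (n + 2)) := Tuple.sort w with hσ
  set t : Fin (n + 2) → ℝ := w ∘ σ with ht
  have hmono : Monotone t := Tuple.monotone_sort w
  have hw0 : ∀ j, 0 ≤ w j := by
    intro j
    refine Fin.cases ?_ (fun j => ?_) j
    · simp [hw]
    · refine Fin.cases ?_ (fun j => ?_) j <;> simp [hw, hr, le_min_iff, le_max_iff]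
  have hw1 : ∀ j, w j ≤ 1 := by
    intro j
    refine Fin.cases ?_ (fun j => ?_) j
    · simp [hw]
    · refine Fin.cases ?_ (fun j => ?_) j <;> simp [hw, hr, min_le_iff]
  have ht0 : t 0 = 0 := by
    refine le_antisymm ?_ (hw0 _)
    have : t (σ.symm 0) = 0 := by simp [ht, hw]
    calc t 0 ≤ t (σ.symm 0) := hmono (Fin.zero_le _)
    _ = 0 := this
  have ht1 : t (Fin.last (n + 1)) = 1 := by
    refine le_antisymm (hw1 _) ?_
    have : t (σ.symm 1) = 1 := by simp [ht, hw]
    calc (1 : ℝ) = t (σ.symm 1) := this.symm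
    _ ≤ t (Fin.last (n + 1)) := hmono (Fin.le_last _)
  -- r values appear among t values
  have hrt : ∀ k : Fin n, ∃ j : Fin (n + 2), t j = r k := by
    intro k
    refine ⟨σ.symm k.succ.succ, ?_⟩
    simp [ht, hw]
  have haff : ∀ i : Fin (n + 1), ∃ a b : Fin n → ℝ,
      ∀ s ∈ Set.Icc (t i.castSucc) (t i.succ),
        relu n (p + s • (q - p)) = a + s • b := by
    intro i
    set a := t i.castSucc with hadef
    set b := t i.succ with hbdef
    have hab : a ≤ b := hmono (Fin.castSucc_le_succ i)
    have ha0 : 0 ≤ a := ht0 ▸ hmono (Fin.zero_le _)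
    have hb1 : b ≤ 1 := ht1 ▸ hmono (Fin.le_last _)
    have key : ∀ k : Fin n,
        (∀ s ∈ Set.Icc a b, 0 ≤ p k + s * (q k - p k)) ∨
        (∀ s ∈ Set.Icc a b, p k + s * (q k - p k) ≤ 0) := by
      intro k
      set d := q k - p k with hd
      rcases le_or_gt 0 (p k + a * d) with hga | hga
      · rcases le_or_gt 0 (p k + b * d) with hgb | hgb
        · exact Or.inl fun s hs => affine_nonneg_of_endpoints hab hs.1 hs.2 hga hgb
        · rcases eq_or_lt_of_le hga with hga' | hga'
          · refine Or.inr fun s hs => ?_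
            have := affine_nonneg_of_endpoints (P := -(p k)) (d := -d) hab hs.1 hs.2
              (by linarith) (by linarith)
            linarith
          · -- strict crossing: contradiction
            exfalso
            have hdneg : d < 0 := by nlinarith
            have hpkqk : p k ≠ q k := by intro h; rw [hd, h] at hga' hgb; linarith
            set s0 := p k / (p k - q k) with hs0
            have hs0' : s0 = -(p k) / d := by
              have hpq : p k - q k = -d := by rw [hd]; ring
              rw [hs0, hpq, div_neg, neg_div]
            have h1 : a < s0 := by
              rw [hs0', lt_div_iff_of_neg hdneg]
              linarith
            have h2 : s0 < b := by
              rw [hs0', div_lt_iff_of_neg hdneg]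
              linarith
            have hrk : r k = s0 := by
              rw [hr]
              simp only [if_neg hpkqk]
              rw [max_eq_right (by linarith), min_eq_right (by linarith)]
            obtain ⟨j, hj⟩ := hrt k
            rw [hrk] at hj
            -- t j = s0 with a < s0 < b : contradiction with consecutiveness
            have hjlt : j < i.succ := by
              by_contra h
              push_neg at h
              have := hmono h
              rw [hj] at this
              exact absurd this (not_le.2 (hbdef ▸ h2))
            have hjle : j ≤ i.castSucc := by
              rcases j with ⟨j, hj2⟩
              rcases i with ⟨i, hi2⟩
              simp only [Fin.lt_def, Fin.succ] at hjlt
              simp only [Fin.le_def, Fin.castSucc, Fin.castAdd, Fin.castLE]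
              omega
            have := hmono hjle
            rw [hj] at this
            exact absurd this (not_le.2 (hadef ▸ h1))
      · rcases le_or_gt 0 (p k + b * d) with hgb | hgb
        · rcases eq_or_lt_of_le hgb with hgb' | hgb'
          · refine Or.inr fun s hs => ?_
            have := affine_nonneg_of_endpoints (P := -(p k)) (d := -d) hab hs.1 hs.2
              (by linarith) (by linarith)
            linarith
          · exfalso
            have hdpos : 0 < d := by nlinarith
            have hpkqk : p k ≠ q k := by intro h; rw [hd, h] at hga hgb'; linarith
            set s0 := p k / (p k - q k) with hs0
            have hs0' : s0 = -(p k) / d := by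
              have hpq : p k - q k = -d := by rw [hd]; ring
              rw [hs0, hpq, div_neg, neg_div]
            have h1 : a < s0 := by
              rw [hs0', lt_div_iff₀ hdpos]
              linarith
            have h2 : s0 < b := by
              rw [hs0', div_lt_iff₀ hdpos]
              linarith
            have hrk : r k = s0 := by
              rw [hr]
              simp only [if_neg hpkqk]
              rw [max_eq_right (by linarith), min_eq_right (by linarith)]
            obtain ⟨j, hj⟩ := hrt k
            rw [hrk] at hj
            have hjlt : j < i.succ := by
              by_contra h
              push_neg at h
              have := hmono h
              rw [hj] at this
              exact absurd this (not_le.2 (hbdef ▸ h2))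
            have hjle : j ≤ i.castSucc := by
              rcases j with ⟨j, hj2⟩
              rcases i with ⟨i, hi2⟩
              simp only [Fin.lt_def, Fin.succ] at hjlt
              simp only [Fin.le_def, Fin.castSucc, Fin.castAdd, Fin.castLE]
              omega
            have := hmono hjle
            rw [hj] at this
            exact absurd this (not_le.2 (hadef ▸ h1))
        · refine Or.inr fun s hs => ?_
          have := affine_nonneg_of_endpoints (P := -(p k)) (d := -d) hab hs.1 hs.2
            (by linarith) (by linarith)
          linarith
    refine ⟨fun k => if (∀ s ∈ Set.Icc a b, 0 ≤ p k + s * (q k - p k)) then p k else 0,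
            fun k => if (∀ s ∈ Set.Icc a b, 0 ≤ p k + s * (q k - p k)) then q k - p k else 0,
            fun s hs => ?_⟩
    funext k
    simp only [relu, Pi.add_apply, Pi.smul_apply, Pi.sub_apply, smul_eq_mul]
    split_ifs with h
    · exact max_eq_left (h s hs)
    · have := (key k).resolve_left h s hs
      simpa using max_eq_right this
  refine ⟨n, le_refl n, t, hmono, ht0, ht1, haff, ?_⟩
  have hIcc : Set.Icc (0 : ℝ) 1 = ⋃ i : Fin (n + 1), Set.Icc (t i.castSucc) (t i.succ) := by
    ext s
    simp only [Set.mem_iUnion, Set.mem_Icc]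
    constructor
    · rintro ⟨hs0, hs1⟩
      have hne : (Finset.univ.filter (fun j : Fin (n + 2) => t j ≤ s)).Nonempty :=
        ⟨0, by simp [ht0, hs0]⟩
      set j := (Finset.univ.filter (fun j : Fin (n + 2) => t j ≤ s)).max' hne with hjdef
      have hjmem : t j ≤ s := by
        have := Finset.max'_mem _ hne
        simpa using this
      by_cases hlast : j = Fin.last (n + 1)
      · refine ⟨Fin.last n, ?_, ?_⟩
        · calc t (Fin.last n).castSucc ≤ t (Fin.last (n + 1)) := hmono (Fin.le_last _)
          _ = t j := by rw [hlast]
          _ ≤ s := hjmem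
        · have : (Fin.last n).succ = Fin.last (n + 1) := by
            ext; simp
          rw [this, ht1]; exact hs1
      · obtain ⟨i, hij⟩ : ∃ i : Fin (n + 1), j = i.castSucc := by
          have hj3 : (j : ℕ) ≠ n + 1 := by
            intro h
            exact hlast (by ext; simp [h])
          have hj2 : (j : ℕ) < n + 2 := j.isLt
          exact ⟨⟨(j : ℕ), by omega⟩, by ext; simp⟩
        refine ⟨i, by rw [← hij]; exact hjmem, ?_⟩
        by_contra h
        push_neg at h
        have hmem : i.succ ∈ Finset.univ.filter (fun j : Fin (n + 2) => t j ≤ s) := by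
          simp [le_of_lt h]
        have hle := Finset.le_max' _ _ hmem
        rw [← hjdef, hij] at hle
        have : (i.succ : Fin (n + 2)) ≤ i.castSucc := hle
        simp [Fin.le_def] at this
    · rintro ⟨i, h1, h2⟩
      constructor
      · calc (0:ℝ) = t 0 := ht0.symm
        _ ≤ t i.castSucc := hmono (Fin.zero_le _)
        _ ≤ s := h1
      · calc s ≤ t i.succ := h2
        _ ≤ t (Fin.last (n + 1)) := hmono (Fin.le_last _)
        _ = 1 := ht1
  rw [segment_eq_image' ℝ p q, hIcc, Set.image_iUnion, Set.image_iUnion]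
  refine Set.iUnion_congr fun i => ?_
  rw [← Set.image_comp]
  have hab : t i.castSucc ≤ t i.succ := hmono (Fin.castSucc_le_succ i)
  obtain ⟨A, B, hAB⟩ := haff i
  calc (relu n ∘ fun θ => p + θ • (q - p)) '' Set.Icc (t i.castSucc) (t i.succ)
      = (fun s => A + s • B) '' Set.Icc (t i.castSucc) (t i.succ) :=
        Set.image_congr (fun s hs => hAB s hs)
    _ = segment ℝ (A + t i.castSucc • B) (A + t i.succ • B) := image_affine_Icc A B hab
    _ = _ := by
        rw [← hAB _ (Set.left_mem_Icc.2 hab), ← hAB _ (Set.right_mem_Icc.2 hab)]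
end

section
/- Let n be a natural number and let relu : (Fin n → ℝ) → (Fin n → ℝ) be the coordinatewise map (relu x) i = max (x i) 0. If S ⊆ (Fin n → ℝ) is a finite union of line segments, i.e., there is a finite index set and pairs (pⱼ, qⱼ) with S = ⋃ⱼ segment ℝ pⱼ qⱼ, then the image relu '' S is also a finite union of line segments: there is a finite index set and pairs (uₗ, vₗ) with relu '' S = ⋃ₗ segment ℝ uₗ vₗ. -/
open Set

/-- "Finite union of segments" predicate. -/
def FUS (n : ℕ) (S : Set (Fin n → ℝ)) : Prop :=
  ∃ l : ℕ, ∃ U V : Fin l → (Fin n → ℝ), S = ⋃ i : Fin l, segment ℝ (U i) (V i)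

lemma FUS_union {n : ℕ} {S T : Set (Fin n → ℝ)} (hS : FUS n S) (hT : FUS n T) :
    FUS n (S ∪ T) := by
  obtain ⟨l₁, U₁, V₁, rfl⟩ := hS
  obtain ⟨l₂, U₂, V₂, rfl⟩ := hT
  refine ⟨l₁ + l₂, Fin.append U₁ U₂, Fin.append V₁ V₂, ?_⟩
  ext x
  simp only [mem_union, mem_iUnion]
  constructor
  · rintro (⟨i, hi⟩ | ⟨i, hi⟩)
    · exact ⟨Fin.castAdd l₂ i, by rwa [Fin.append_left, Fin.append_left]⟩
    · exact ⟨Fin.natAdd l₁ i, by rwa [Fin.append_right, Fin.append_right]⟩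
  · rintro ⟨i, hi⟩
    by_cases h : (i : ℕ) < l₁
    · left
      refine ⟨⟨i, h⟩, ?_⟩
      have : i = Fin.castAdd l₂ ⟨i, h⟩ := by ext; rfl
      rwa [this, Fin.append_left, Fin.append_left] at hi
    · right
      push_neg at h
      refine ⟨⟨(i : ℕ) - l₁, by omega⟩, ?_⟩
      have : i = Fin.natAdd l₁ ⟨(i : ℕ) - l₁, by omega⟩ := by ext; simp; omega
      rwa [this, Fin.append_right, Fin.append_right] at hi

lemma FUS_iUnion {n : ℕ} : ∀ (k : ℕ) (g : Fin k → Set (Fin n → ℝ)),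
    (∀ j, FUS n (g j)) → FUS n (⋃ j, g j) := by
  intro k
  induction k with
  | zero =>
    intro g _
    exact ⟨0, Fin.elim0, Fin.elim0, by simp⟩
  | succ k ih =>
    intro g hg
    have : (⋃ j, g j) = g 0 ∪ ⋃ j : Fin k, g j.succ := by
      ext x; simp [mem_iUnion, Fin.exists_fin_succ]
    rw [this]
    exact FUS_union (hg 0) (ih _ fun j => hg j.succ)

/-- ReLU applied only at coordinate `i`. -/
def reluAt (n : ℕ) (i : Fin n) : (Fin n → ℝ) → (Fin n → ℝ) :=
  fun x j => if j = i then max (x j) 0 else x j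

/-- The linear map zeroing out coordinate `i`. -/
def zeroAt (n : ℕ) (i : Fin n) : (Fin n → ℝ) →ₗ[ℝ] (Fin n → ℝ) where
  toFun x := fun j => if j = i then 0 else x j
  map_add' x y := by funext j; by_cases h : j = i <;> simp [h]
  map_smul' c x := by funext j; by_cases h : j = i <;> simp [h]

lemma coord_mem {n : ℕ} {p q x : Fin n → ℝ} (i : Fin n) (hx : x ∈ segment ℝ p q) :
    x i ∈ segment ℝ (p i) (q i) := by
  obtain ⟨a, b, ha, hb, hab, rfl⟩ := hx
  exact ⟨a, b, ha, hb, hab, by simp [smul_eq_mul]⟩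

lemma reluAt_image_nonneg {n : ℕ} (i : Fin n) (p q : Fin n → ℝ)
    (hp : 0 ≤ p i) (hq : 0 ≤ q i) :
    reluAt n i '' segment ℝ p q = segment ℝ p q := by
  have : ∀ x ∈ segment ℝ p q, reluAt n i x = x := by
    intro x hx
    have hxi : 0 ≤ x i := by
      obtain ⟨a, b, ha, hb, hab, h⟩ := coord_mem i hx
      rw [← h]
      exact add_nonneg (mul_nonneg ha hp) (mul_nonneg hb hq)
    funext j
    by_cases h : j = i
    · subst h; simp [reluAt, max_eq_left hxi]
    · simp [reluAt, h]
  rw [Set.image_congr this, image_id']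

lemma reluAt_image_nonpos {n : ℕ} (i : Fin n) (p q : Fin n → ℝ)
    (hp : p i ≤ 0) (hq : q i ≤ 0) :
    reluAt n i '' segment ℝ p q = segment ℝ (reluAt n i p) (reluAt n i q) := by
  have key : ∀ x : Fin n → ℝ, x i ≤ 0 → reluAt n i x = zeroAt n i x := by
    intro x hx
    funext j
    by_cases h : j = i
    · subst h; simp [reluAt, zeroAt, max_eq_right hx]
    · simp [reluAt, zeroAt, h]
  have hcong : ∀ x ∈ segment ℝ p q, reluAt n i x = zeroAt n i x := by
    intro x hx
    apply key
    obtain ⟨a, b, ha, hb, hab, h⟩ := coord_mem i hx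
    rw [← h]
    have := add_nonneg (mul_nonneg ha (neg_nonneg.2 hp)) (mul_nonneg hb (neg_nonneg.2 hq))
    simp only [smul_eq_mul]
    linarith
  rw [Set.image_congr hcong, key p hp, key q hq]
  exact image_segment ℝ (zeroAt n i).toAffineMap p q

lemma lineMap_image_Icc {n : ℕ} (p q : Fin n → ℝ) {a b : ℝ} (hab : a ≤ b) :
    (AffineMap.lineMap p q : ℝ →ᵃ[ℝ] (Fin n → ℝ)) '' Icc a b =
      segment ℝ (AffineMap.lineMap p q a) (AffineMap.lineMap p q b) := by
  rw [← segment_eq_Icc hab, image_segment]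

lemma segment_split {n : ℕ} (p q : Fin n → ℝ) {t : ℝ} (h0 : 0 ≤ t) (h1 : t ≤ 1) :
    segment ℝ p q =
      segment ℝ p (AffineMap.lineMap p q t) ∪
        segment ℝ (AffineMap.lineMap p q t) q := by
  rw [segment_eq_image_lineMap, ← Set.Icc_union_Icc_eq_Icc h0 h1, image_union,
    lineMap_image_Icc p q h0, lineMap_image_Icc p q h1,
    AffineMap.lineMap_apply_zero, AffineMap.lineMap_apply_one]

lemma lineMap_coord {n : ℕ} (p q : Fin n → ℝ) (t : ℝ) (i : Fin n) :
    (AffineMap.lineMap p q t : Fin n → ℝ) i = t * (q i - p i) + p i := by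
  simp [AffineMap.lineMap_apply, smul_eq_mul]

lemma reluAt_image_segment {n : ℕ} (i : Fin n) (p q : Fin n → ℝ) :
    ∃ a b c d : Fin n → ℝ,
      reluAt n i '' segment ℝ p q = segment ℝ a b ∪ segment ℝ c d := by
  rcases le_total 0 (p i) with hp | hp <;> rcases le_total 0 (q i) with hq | hq
  · exact ⟨p, q, p, q, by rw [reluAt_image_nonneg i p q hp hq, union_self]⟩
  · -- 0 ≤ p i, q i ≤ 0
    by_cases hd : p i - q i = 0
    · have hp0 : p i = 0 := le_antisymm (by linarith) hp
      have hq0 : q i = 0 := by linarith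
      exact ⟨p, q, p, q, by rw [reluAt_image_nonneg i p q hp (le_of_eq hq0.symm), union_self]⟩
    · have hdpos : 0 < p i - q i := lt_of_le_of_ne (by linarith) (Ne.symm hd)
      set t : ℝ := p i / (p i - q i) with ht
      have h0 : 0 ≤ t := div_nonneg hp hdpos.le
      have h1 : t ≤ 1 := by rw [div_le_one hdpos]; linarith
      set m : Fin n → ℝ := AffineMap.lineMap p q t with hm
      have hmi : m i = 0 := by
        rw [hm, lineMap_coord, ht]
        field_simp
        ring
      refine ⟨p, m, reluAt n i m, reluAt n i q, ?_⟩
      rw [segment_split p q h0 h1, image_union,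
        reluAt_image_nonneg i p m hp (le_of_eq hmi.symm),
        reluAt_image_nonpos i m q (le_of_eq hmi) hq]
  · -- p i ≤ 0, 0 ≤ q i
    by_cases hd : p i - q i = 0
    · have hp0 : p i = 0 := le_antisymm hp (by linarith)
      exact ⟨p, q, p, q, by rw [reluAt_image_nonneg i p q (le_of_eq hp0.symm) hq, union_self]⟩
    · have hdneg : p i - q i < 0 := lt_of_le_of_ne (by linarith) hd
      set t : ℝ := p i / (p i - q i) with ht
      have h0 : 0 ≤ t := div_nonneg_of_nonpos hp hdneg.le
      have h1 : t ≤ 1 := by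
        rw [ht, div_le_iff_of_neg hdneg]; linarith
      set m : Fin n → ℝ := AffineMap.lineMap p q t with hm
      have hmi : m i = 0 := by
        rw [hm, lineMap_coord, ht]
        field_simp
        ring
      refine ⟨reluAt n i p, reluAt n i m, m, q, ?_⟩
      rw [segment_split p q h0 h1, image_union,
        reluAt_image_nonpos i p m hp (le_of_eq hmi),
        reluAt_image_nonneg i m q (le_of_eq hmi.symm) hq]
  · exact ⟨reluAt n i p, reluAt n i q, reluAt n i p, reluAt n i q,
      by rw [reluAt_image_nonpos i p q hp hq, union_self]⟩

lemma FUS_reluAt {n : ℕ} (i : Fin n) {S : Set (Fin n → ℝ)} (hS : FUS n S) :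
    FUS n (reluAt n i '' S) := by
  obtain ⟨l, U, V, rfl⟩ := hS
  rw [image_iUnion]
  apply FUS_iUnion
  intro j
  obtain ⟨a, b, c, d, h⟩ := reluAt_image_segment i (U j) (V j)
  refine ⟨2, ![a, c], ![b, d], ?_⟩
  rw [h]
  ext x
  simp [mem_iUnion, Fin.exists_fin_two]

/-- Partial ReLU: applies ReLU to coordinates `< m`. -/
def partialRelu (n m : ℕ) : (Fin n → ℝ) → (Fin n → ℝ) :=
  fun x j => if (j : ℕ) < m then max (x j) 0 else x j

lemma partialRelu_succ {n m : ℕ} (hm : m < n) :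
    partialRelu n (m + 1) = reluAt n ⟨m, hm⟩ ∘ partialRelu n m := by
  funext x j
  by_cases hj : j = ⟨m, hm⟩
  · subst hj
    simp [partialRelu, reluAt]
  · have hjm : (j : ℕ) ≠ m := fun h => hj (Fin.ext h)
    by_cases h : (j : ℕ) < m
    · simp [partialRelu, reluAt, hj, h, Nat.lt_succ_of_lt h]
    · have : ¬ (j : ℕ) < m + 1 := by omega
      simp [partialRelu, reluAt, hj, h, this]

lemma FUS_partialRelu {n : ℕ} (m : ℕ) (hm : m ≤ n) {S : Set (Fin n → ℝ)} (hS : FUS n S) :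
    FUS n (partialRelu n m '' S) := by
  induction m with
  | zero =>
    have : partialRelu n 0 '' S = S := by
      have h : ∀ x ∈ S, partialRelu n 0 x = x := by
        intro x _; funext j; simp [partialRelu]
      rw [Set.image_congr h, image_id']
    rwa [this]
  | succ m ih =>
    rw [partialRelu_succ hm, Set.image_comp]
    exact FUS_reluAt _ (ih (by omega))

/-- **Closure of finite unions of segments under ReLU.** If
`S = ⋃ⱼ segment ℝ (P j) (Q j)` is a finite union of line segments, then its
image under the coordinatewise ReLU is again a finite union of line segments. -/
theorem relu_image_finite_union_of_segments
    (n k : ℕ) (P Q : Fin k → (Fin n → ℝ)) (S : Set (Fin n → ℝ))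
    (hS : S = ⋃ j : Fin k, segment ℝ (P j) (Q j)) :
    ∃ l : ℕ, ∃ U V : Fin l → (Fin n → ℝ),
      relu n '' S = ⋃ i : Fin l, segment ℝ (U i) (V i) := by
  have hrelu : relu n = partialRelu n n := by
    funext x j
    simp [relu, partialRelu, j.isLt]
  rw [hrelu]
  exact FUS_partialRelu n le_rfl ⟨k, P, Q, hS⟩
end
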